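/- arXiv:2312.09882 — 3 statements merged into one kernel-verified Lean document; each statement's English description precedes it below -/
import Mathlib

section
/- Let R be a commutative ring, let s₁, s₂, s₃ be units of R, and let Q, Q' be elements of R. Set P = 1 − (1−s₁)(1−s₂)(1−s₃)·Q and P' = 1 − (1−s₁⁻¹)(1−s₂⁻¹)(1−s₃⁻¹)·Q'. Then s₁s₂s₃·(1 − P·P') = (1−s₁)(1−s₂)(1−s₃)·(s₁s₂s₃·Q − Q' + Q·Q'·(1−s₁)(1−s₂)(1−s₃)). -/
theorem stmt0 (R : Type*) [CommRing R] (s₁ s₂ s₃ : Rˣ) (Q Q' : R)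
    (P : R) (hP : P = 1 - (1 - (s₁ : R)) * (1 - (s₂ : R)) * (1 - (s₃ : R)) * Q)
    (P' : R) (hP' : P' = 1 - (1 - (↑s₁⁻¹ : R)) * (1 - (↑s₂⁻¹ : R)) * (1 - (↑s₃⁻¹ : R)) * Q') :
    (s₁ : R) * s₂ * s₃ * (1 - P * P') =
      (1 - (s₁ : R)) * (1 - (s₂ : R)) * (1 - (s₃ : R)) *
        ((s₁ : R) * s₂ * s₃ * Q - Q' +
          Q * Q' * ((1 - (s₁ : R)) * (1 - (s₂ : R)) * (1 - (s₃ : R)))) := by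
  subst hP hP'
  have h1 : (s₁ : R) * (↑s₁⁻¹ : R) = 1 := by exact_mod_cast s₁.mul_inv
  have h2 : (s₂ : R) * (↑s₂⁻¹ : R) = 1 := by exact_mod_cast s₂.mul_inv
  have h3 : (s₃ : R) * (↑s₃⁻¹ : R) = 1 := by exact_mod_cast s₃.mul_inv
  have e1 : (s₁ : R) * (1 - (↑s₁⁻¹ : R)) = (s₁ : R) - 1 := by linear_combination -h1
  have e2 : (s₂ : R) * (1 - (↑s₂⁻¹ : R)) = (s₂ : R) - 1 := by linear_combination -h2
  have e3 : (s₃ : R) * (1 - (↑s₃⁻¹ : R)) = (s₃ : R) - 1 := by linear_combination -h3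
  have e : (s₁ : R) * s₂ * s₃ *
      ((1 - (↑s₁⁻¹ : R)) * (1 - (↑s₂⁻¹ : R)) * (1 - (↑s₃⁻¹ : R))) =
      -((1 - (s₁ : R)) * (1 - (s₂ : R)) * (1 - (s₃ : R))) := by
    linear_combination ((s₂ : R) * (1 - (↑s₂⁻¹ : R)) * ((s₃ : R) * (1 - (↑s₃⁻¹ : R)))) * e1 +
      (((s₁ : R) - 1) * ((s₃ : R) * (1 - (↑s₃⁻¹ : R)))) * e2 +
      (((s₁ : R) - 1) * ((s₂ : R) - 1)) * e3
  linear_combination (Q' - (1 - (s₁ : R)) * (1 - (s₂ : R)) * (1 - (s₃ : R)) * Q * Q') * e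
end

section
/- Let a and b be real numbers with a ≠ b, a ≠ −b, a ≠ 0, and b ≠ 0. Then −(3a−b)(3a+b)(3b−a)(3b+a)/((a−b)²(a+b)²) + (3a−b)²(3a+b)(2a−b)/(b(a−b)²(a+b)) + (3b−a)²(3b+a)(2b−a)/(a(b−a)²(a+b)) − (3a−b)(3a+b)²(2a+b)/(b(a−b)(a+b)²) − (3b−a)(3b+a)²(2b+a)/(a(b−a)(a+b)²) = 25. -/
theorem stmt10 (a b : ℝ) (hab : a ≠ b) (hab' : a ≠ -b) (ha : a ≠ 0) (hb : b ≠ 0) :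
    -((3 * a - b) * (3 * a + b) * (3 * b - a) * (3 * b + a) / ((a - b) ^ 2 * (a + b) ^ 2))
      + (3 * a - b) ^ 2 * (3 * a + b) * (2 * a - b) / (b * (a - b) ^ 2 * (a + b))
      + (3 * b - a) ^ 2 * (3 * b + a) * (2 * b - a) / (a * (b - a) ^ 2 * (a + b))
      - (3 * a - b) * (3 * a + b) ^ 2 * (2 * a + b) / (b * (a - b) * (a + b) ^ 2)
      - (3 * b - a) * (3 * b + a) ^ 2 * (2 * b + a) / (a * (b - a) * (a + b) ^ 2) = 25 := by
  have h1 : a - b ≠ 0 := sub_ne_zero.mpr hab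
  have h2 : a + b ≠ 0 := by intro h; exact hab' (by linarith)
  have h3 : b - a ≠ 0 := fun h => h1 (by linarith)
  field_simp
  ring
end

section
/- Let a and b be real numbers such that a, b, a−b, a+b, 3a−b, 3a+b, a−3b, and a+3b are all nonzero. Define e₁₁ = (3a−b)(3a+b)/((a−b)(a+b)), e₁₂ = (3b−a)(3b+a)/((b−a)(a+b)), e₂₂ = (3a−b)²(3a+b)(2a−b)/(b(a−b)²(a+b)), e₂₃ = (3b−a)²(3b+a)(2b−a)/(a(b−a)²(a+b)), e₂₄ = −(3a−b)(3a+b)²(2a+b)/(b(a−b)(a+b)²), e₂₅ = −(3b−a)(3b+a)²(2b+a)/(a(b−a)(a+b)²). Then e₁₁·e₂₃ + e₁₁·e₂₅ + e₁₂·e₂₂ + e₁₂·e₂₄ + (3a−b)²(3a+b)(a+3b)(5a−3b)(2a−b)²/(3b²(a−b)³(a+b)(3b−a)) + (3b−a)²(3b+a)(b+3a)(5b−3a)(2b−a)²/(3a²(b−a)³(a+b)(3a−b)) − (3a−b)(3a+b)²(a−3b)(5a+3b)(2a+b)²/(3b²(a−b)(a+b)³(a+3b)) − (3b−a)(3b+a)²(b−3a)(5b+3a)(2b+a)²/(3a²(b−a)(a+b)³(b+3a))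 + (3a+b)(3a−b)(5a−b)(2a−b)(2a+b)/(b²(a−b)²(a+b)) + (3b+a)(3b−a)(5b−a)(2b−a)(2b+a)/(a²(a−b)²(a+b)) + 9(3a+b)³(3a−b)³/((a+b)²(a−b)²(a+3b)(a−3b)) + 9(3b+a)³(3b−a)³/((a+b)²(a−b)²(b+3a)(b−3a)) + (3a−b)(3a+b)(5a+b)(2a+b)(2a−b)/(b²(a−b)(a+b)²) + (3b−a)(3b+a)(5b+a)(2b+a)(2b−a)/(a²(b−a)(a+b)²) = −50. -/
set_option maxHeartbeats 4000000 in
theorem stmt11 (a b : ℝ) (ha : a ≠ 0) (hb : b ≠ 0) (hab : a - b ≠ 0) (hab' : a + b ≠ 0)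
    (h3ab : 3 * a - b ≠ 0) (h3ab' : 3 * a + b ≠ 0) (ha3b : a - 3 * b ≠ 0) (ha3b' : a + 3 * b ≠ 0)
    (e₁₁ e₁₂ e₂₂ e₂₃ e₂₄ e₂₅ : ℝ)
    (he₁₁ : e₁₁ = (3 * a - b) * (3 * a + b) / ((a - b) * (a + b)))
    (he₁₂ : e₁₂ = (3 * b - a) * (3 * b + a) / ((b - a) * (a + b)))
    (he₂₂ : e₂₂ = (3 * a - b) ^ 2 * (3 * a + b) * (2 * a - b) / (b * (a - b) ^ 2 * (a + b)))
    (he₂₃ : e₂₃ = (3 * b - a) ^ 2 * (3 * b + a) * (2 * b - a) / (a * (b - a) ^ 2 * (a + b)))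
    (he₂₄ : e₂₄ = -((3 * a - b) * (3 * a + b) ^ 2 * (2 * a + b) / (b * (a - b) * (a + b) ^ 2)))
    (he₂₅ : e₂₅ = -((3 * b - a) * (3 * b + a) ^ 2 * (2 * b + a) / (a * (b - a) * (a + b) ^ 2))) :
    e₁₁ * e₂₃ + e₁₁ * e₂₅ + e₁₂ * e₂₂ + e₁₂ * e₂₄
      + (3 * a - b) ^ 2 * (3 * a + b) * (a + 3 * b) * (5 * a - 3 * b) * (2 * a - b) ^ 2 /
          (3 * b ^ 2 * (a - b) ^ 3 * (a + b) * (3 * b - a))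
      + (3 * b - a) ^ 2 * (3 * b + a) * (b + 3 * a) * (5 * b - 3 * a) * (2 * b - a) ^ 2 /
          (3 * a ^ 2 * (b - a) ^ 3 * (a + b) * (3 * a - b))
      - (3 * a - b) * (3 * a + b) ^ 2 * (a - 3 * b) * (5 * a + 3 * b) * (2 * a + b) ^ 2 /
          (3 * b ^ 2 * (a - b) * (a + b) ^ 3 * (a + 3 * b))
      - (3 * b - a) * (3 * b + a) ^ 2 * (b - 3 * a) * (5 * b + 3 * a) * (2 * b + a) ^ 2 /
          (3 * a ^ 2 * (b - a) * (a + b) ^ 3 * (b + 3 * a))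
      + (3 * a + b) * (3 * a - b) * (5 * a - b) * (2 * a - b) * (2 * a + b) /
          (b ^ 2 * (a - b) ^ 2 * (a + b))
      + (3 * b + a) * (3 * b - a) * (5 * b - a) * (2 * b - a) * (2 * b + a) /
          (a ^ 2 * (a - b) ^ 2 * (a + b))
      + 9 * (3 * a + b) ^ 3 * (3 * a - b) ^ 3 /
          ((a + b) ^ 2 * (a - b) ^ 2 * (a + 3 * b) * (a - 3 * b))
      + 9 * (3 * b + a) ^ 3 * (3 * b - a) ^ 3 /
          ((a + b) ^ 2 * (a - b) ^ 2 * (b + 3 * a) * (b - 3 * a))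
      + (3 * a - b) * (3 * a + b) * (5 * a + b) * (2 * a + b) * (2 * a - b) /
          (b ^ 2 * (a - b) * (a + b) ^ 2)
      + (3 * b - a) * (3 * b + a) * (5 * b + a) * (2 * b + a) * (2 * b - a) /
          (a ^ 2 * (b - a) * (a + b) ^ 2) = -50 := by
  have hba : b - a ≠ 0 := fun h => hab (by linarith)
  have h3ba : 3 * b - a ≠ 0 := fun h => ha3b (by linarith)
  have h3ba' : 3 * b + a ≠ 0 := fun h => ha3b' (by linarith)
  have hb3a : b - 3 * a ≠ 0 := fun h => h3ab (by linarith)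
  have hb3a' : b + 3 * a ≠ 0 := fun h => h3ab' (by linarith)
  subst he₁₁ he₁₂ he₂₂ he₂₃ he₂₄ he₂₅
  field_simp
  ring
end
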